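/- Specializing at q = 1, s = 1, x = 1/2, the q-Chebyshev polynomials of the first kind give half the Lucas numbers: 2·T_n(1/2, 1, 1) = L_n for all n ≥ 1. -/
import Mathlib


/-- q-Chebyshev polynomials of the first kind. -/
noncomputable def qcT (x s q : ℝ) : ℕ → ℝ
  | 0 => 1
  | 1 => x
  | n + 2 => (1 + q ^ (n + 1)) * x * qcT x s q (n + 1) + q ^ (n + 1) * s * qcT x s q n

/-- Lucas numbers. -/
def luc : ℕ → ℝ
  | 0 => 2
  | 1 => 1
  | n + 2 => luc (n + 1) + luc n

lemma qcT_lucas_aux (n : ℕ) : 2 * qcT (1 / 2) 1 1 n = luc n := by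
  induction n using Nat.strong_induction_on with
  | _ n ih =>
    match n with
    | 0 => simp [qcT, luc]
    | 1 => norm_num [qcT, luc]
    | n + 2 =>
      have h1 := ih (n + 1) (by omega)
      have h0 := ih n (by omega)
      simp only [qcT, luc, one_pow]
      ring_nf
      ring_nf at h1 h0
      linarith

theorem qcT_lucas (n : ℕ) (hn : 1 ≤ n) : 2 * qcT (1 / 2) 1 1 n = luc n := by
  exact qcT_lucas_aux n
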